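/- Let X₁,...,X_n be real numbers with distinct absolute values, all nonzero. Define W⁺ = Σ_i R_i⁺·1{X_i > 0}, where R_i⁺ is the rank of |X_i| among |X₁|,...,|X_n|. Then W⁺ = Σ_{i<j} 1{X_i + X_j > 0} + Σ_i 1{X_i > 0}. -/

import Mathlib

open Finset

theorem signed_rank_decomposition (n : ℕ) (X : Fin n → ℝ)
    (hinj : Function.Injective fun i => |X i|) (hne : ∀ i, X i ≠ 0) :
    (∑ i : Fin n, (univ.filter fun j => |X j| ≤ |X i|).card * (if 0 < X i then 1 else 0))
      = (∑ p ∈ univ.filter (fun p : Fin n × Fin n => p.1 < p.2),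
          if 0 < X p.1 + X p.2 then 1 else 0)
        + ∑ i : Fin n, (if 0 < X i then 1 else 0) := by
  set g : Fin n → Fin n → ℕ :=
    fun i j => (if |X j| ≤ |X i| then (1:ℕ) else 0) * (if 0 < X i then 1 else 0) with hg
  have key : ∀ i j : Fin n, |X i| ≠ |X j| →
      g i j + g j i = if 0 < X i + X j then 1 else 0 := by
    intro i j hab
    have hi := hne i; have hj := hne j
    simp only [hg]
    rcases lt_or_gt_of_ne hab with hlt | hlt <;>
    rcases abs_cases (X i) with ⟨h1, h2⟩ | ⟨h1, h2⟩ <;>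
      rcases abs_cases (X j) with ⟨h3, h4⟩ | ⟨h3, h4⟩ <;>
      split_ifs <;> norm_num <;> linarith
  have lhs_eq : (∑ i : Fin n, (univ.filter fun j => |X j| ≤ |X i|).card * (if 0 < X i then 1 else 0))
      = ∑ p ∈ (univ : Finset (Fin n × Fin n)), g p.1 p.2 := by
    rw [← Finset.univ_product_univ, Finset.sum_product]
    refine Finset.sum_congr rfl fun i _ => ?_
    rw [Finset.card_filter, Finset.sum_mul]
  rw [lhs_eq]
  have split1 := Finset.sum_filter_add_sum_filter_not (univ : Finset (Fin n × Fin n))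
    (fun p => p.1 < p.2) (fun p => g p.1 p.2)
  have split2 := Finset.sum_filter_add_sum_filter_not
    ((univ : Finset (Fin n × Fin n)).filter fun p => ¬ p.1 < p.2)
    (fun p => p.1 = p.2) (fun p => g p.1 p.2)
  -- diagonal sum
  have diag : ∑ p ∈ (((univ : Finset (Fin n × Fin n)).filter fun p => ¬ p.1 < p.2).filter
      fun p => p.1 = p.2), g p.1 p.2 = ∑ i : Fin n, (if 0 < X i then 1 else 0) := by
    rw [Finset.filter_filter]
    refine Finset.sum_nbij' (fun p => p.1) (fun i => (i, i)) ?_ ?_ ?_ ?_ ?_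
    · intro p hp; simp
    · intro i hi; simp
    · intro p hp
      simp only [Finset.mem_filter] at hp
      exact Prod.ext rfl hp.2.2
    · intro i hi; rfl
    · intro p hp
      simp only [Finset.mem_filter] at hp
      simp [hg, hp.2.2, le_refl]
  -- upper triangle equals swapped lower triangle
  have gt_eq : ∑ p ∈ (((univ : Finset (Fin n × Fin n)).filter fun p => ¬ p.1 < p.2).filter
      fun p => ¬ p.1 = p.2), g p.1 p.2
      = ∑ p ∈ ((univ : Finset (Fin n × Fin n)).filter fun p => p.1 < p.2), g p.2 p.1 := by
    rw [Finset.filter_filter]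
    refine Finset.sum_nbij' Prod.swap Prod.swap ?_ ?_ ?_ ?_ ?_
    · intro p hp
      simp only [Finset.mem_filter] at hp ⊢
      refine ⟨Finset.mem_univ _, ?_⟩
      rcases lt_trichotomy p.1 p.2 with h | h | h
      · exact absurd h hp.2.1
      · exact absurd h hp.2.2
      · exact h
    · intro p hp
      simp only [Finset.mem_filter] at hp ⊢
      exact ⟨Finset.mem_univ _, not_lt_of_gt hp.2, (ne_of_lt hp.2).symm⟩
    · intro p _; rfl
    · intro p _; rfl
    · intro p _; rfl
  have combine : (∑ p ∈ ((univ : Finset (Fin n × Fin n)).filter fun p => p.1 < p.2), g p.1 p.2)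
      + ∑ p ∈ ((univ : Finset (Fin n × Fin n)).filter fun p => p.1 < p.2), g p.2 p.1
      = ∑ p ∈ ((univ : Finset (Fin n × Fin n)).filter fun p => p.1 < p.2),
          (if 0 < X p.1 + X p.2 then 1 else 0) := by
    rw [← Finset.sum_add_distrib]
    refine Finset.sum_congr rfl fun p hp => ?_
    simp only [Finset.mem_filter] at hp
    have hne' : |X p.1| ≠ |X p.2| := fun h => (ne_of_lt hp.2) (hinj h)
    exact key p.1 p.2 hne'
  omega
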